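/- For every real number x there exists a complex number w with |w| ≤ |x|³ such that e^{ix} = (1 + i·x)·e^{−x²/2 + w}. -/

import Mathlib

/-!
Since `1 + i x = √(1 + x²) e^{i arctan x}`, the identity holds with
`w = (x² - log (1 + x²)) / 2 + i (x - arctan x)`. Both parts are small:
`0 ≤ t - log (1 + t) ≤ t² / (1 + t)` for `t = x²` bounds the real part by `|x|³ / 2`, and
`0 ≤ x - arctan x ≤ x³ / 3` for `x ≥ 0` (compare derivatives: `0 ≤ 1 - 1 / (1 + t²) ≤ t²`)
bounds the imaginary part by `|x|³ / 3`.
-/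

namespace Real

lemma arctan_le_self {x : ℝ} (hx : 0 ≤ x) : arctan x ≤ x := by
  have hmono : Monotone fun t : ℝ => t - arctan t := by
    have hderiv (t : ℝ) : HasDerivAt (fun t : ℝ => t - arctan t) (1 - 1 / (1 + t ^ 2)) t :=
      (hasDerivAt_id t).sub (hasDerivAt_arctan t)
    refine monotone_of_deriv_nonneg (fun t => (hderiv t).differentiableAt) fun t => ?_
    rw [(hderiv t).deriv, sub_nonneg, div_le_one (by positivity)]
    nlinarith [sq_nonneg t]
  simpa using hmono hx

lemma self_sub_arctan_le {x : ℝ} (hx : 0 ≤ x) : x - arctan x ≤ x ^ 3 / 3 := by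
  have hmono : Monotone fun t : ℝ => t ^ 3 / 3 - t + arctan t := by
    have hderiv (t : ℝ) : HasDerivAt (fun t : ℝ => t ^ 3 / 3 - t + arctan t)
        (t ^ 4 / (1 + t ^ 2)) t := by
      have hcube : HasDerivAt (fun t : ℝ => t ^ 3 / 3) (t ^ 2) t := by
        simpa using (hasDerivAt_pow 3 t).div_const 3
      refine ((hcube.sub (hasDerivAt_id t)).add (hasDerivAt_arctan t)).congr_deriv ?_
      field_simp
      ring
    refine monotone_of_deriv_nonneg (fun t => (hderiv t).differentiableAt) fun t => ?_
    rw [(hderiv t).deriv]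
    positivity
  have h := hmono hx
  norm_num at h
  linarith

lemma abs_self_sub_arctan_le (x : ℝ) : |x - arctan x| ≤ |x| ^ 3 / 3 := by
  rcases le_total 0 x with hx | hx
  · rw [abs_of_nonneg (sub_nonneg.2 (arctan_le_self hx)), abs_of_nonneg hx]
    exact self_sub_arctan_le hx
  · have hsub := self_sub_arctan_le (neg_nonneg.2 hx)
    have harctan := arctan_le_self (neg_nonneg.2 hx)
    rw [arctan_neg] at hsub harctan
    rw [abs_of_nonpos (by linarith), abs_of_nonpos hx]
    linarith

lemma self_sub_log_one_add_le {t : ℝ} (ht : 0 ≤ t) : t - log (1 + t) ≤ t ^ 2 / (1 + t) := by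
  have hpos : 0 < 1 + t := by linarith
  have hlog := one_sub_inv_le_log_of_pos hpos
  have hsplit : t - (1 - (1 + t)⁻¹) = t ^ 2 / (1 + t) := by
    field_simp
    ring
  linarith

lemma abs_sq_sub_log_one_add_sq_le (x : ℝ) : |x ^ 2 - log (1 + x ^ 2)| ≤ |x| ^ 3 := by
  have hpos : 0 < 1 + x ^ 2 := by positivity
  rw [abs_of_nonneg (by linarith [log_le_sub_one_of_pos hpos])]
  calc x ^ 2 - log (1 + x ^ 2) ≤ (x ^ 2) ^ 2 / (1 + x ^ 2) :=
        self_sub_log_one_add_le (sq_nonneg x)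
    _ ≤ |x| ^ 3 := by
        rw [div_le_iff₀ hpos, ← sq_abs x]
        -- `x⁴ ≤ |x|³ (1 + x²)` reduces to `|x| ≤ 1 + |x|²`
        nlinarith [sq_nonneg (|x| - 1), pow_nonneg (abs_nonneg x) 3]

end Real

namespace Complex

lemma one_add_I_mul_ofReal_eq_exp (x : ℝ) :
    1 + I * x = exp ((Real.log (1 + x ^ 2) / 2 : ℝ) + Real.arctan x * I) := by
  have hpos : (0 : ℝ) < 1 + x ^ 2 := by positivity
  have hsqrt : Real.exp (Real.log (1 + x ^ 2) / 2) = √(1 + x ^ 2) := by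
    rw [← Real.log_sqrt hpos.le, Real.exp_log (Real.sqrt_pos.2 hpos)]
  have hsqrt_ne : ((√(1 + x ^ 2) : ℝ) : ℂ) ≠ 0 := by
    exact_mod_cast (Real.sqrt_pos.2 hpos).ne'
  rw [exp_add, exp_mul_I, ← ofReal_exp, ← ofReal_cos, ← ofReal_sin, hsqrt,
    Real.cos_arctan, Real.sin_arctan]
  push_cast
  field_simp

end Complex

theorem exp_I_mul_eq (x : ℝ) :
    ∃ w : ℂ, ‖w‖ ≤ |x| ^ 3 ∧
      Complex.exp (Complex.I * x) = (1 + Complex.I * x) * Complex.exp (-(x : ℂ) ^ 2 / 2 + w) := by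
  set a : ℝ := (x ^ 2 - Real.log (1 + x ^ 2)) / 2
  set b : ℝ := x - Real.arctan x
  refine ⟨a + b * Complex.I, ?_, ?_⟩
  · have ha : |a| ≤ |x| ^ 3 / 2 := by
      rw [abs_div, abs_two]
      gcongr
      exact Real.abs_sq_sub_log_one_add_sq_le x
    calc ‖(a : ℂ) + b * Complex.I‖ ≤ |a| + |b| := by
          simpa using Complex.norm_le_abs_re_add_abs_im (a + b * Complex.I)
      _ ≤ |x| ^ 3 / 2 + |x| ^ 3 / 3 := add_le_add ha (Real.abs_self_sub_arctan_le x)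
      _ ≤ |x| ^ 3 := by linarith [pow_nonneg (abs_nonneg x) 3]
  · rw [Complex.one_add_I_mul_ofReal_eq_exp, ← Complex.exp_add]
    congr 1
    push_cast [a, b]
    ring
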